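/- arXiv:2102.00556 — 2 statements merged into one kernel-verified Lean document; each statement's English description precedes it below -/
import Mathlib

section
/- Monotonicity of the LS curve under a doubly stochastic matrix: if M is doubly stochastic and p is a nonnegative vector, then for all x ∈ [0,n], I(Mp, x) ≤ I(p, x), where I is the Lovász–Simonovits curve. -/
open Matrix

/-- The Lovász–Simonovits curve of a nonnegative vector `p`:
`I(p, x) = max { Σ_u p(u) w(u) : w ∈ [0,1]^n, Σ_u w(u) = x }`. -/
noncomputable def LScurve {n : ℕ} (p : Fin n → ℝ) (x : ℝ) : ℝ :=
  sSup {s | ∃ w : Fin n → ℝ, (∀ i, w i ∈ Set.Icc (0 : ℝ) 1) ∧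
    (∑ i, w i) = x ∧ s = ∑ i, p i * w i}

/-! Doubly stochastic `M` acts on weights by `w ↦ Mᵀ *ᵥ w`: this keeps `w` in the unit cube and
its total mass fixed, and `(M *ᵥ p) ⬝ᵥ w = p ⬝ᵥ (Mᵀ *ᵥ w)`. So every value in the set defining
`I(Mp, x)` is also a value in the set defining `I(p, x)`. -/

namespace Matrix

variable {R ι : Type*} [Fintype ι] [DecidableEq ι] [Semiring R] [PartialOrder R]
  [IsOrderedRing R]

lemma mulVec_mem_Icc_of_mem_rowStochastic {M : Matrix ι ι R} (hM : M ∈ rowStochastic R ι)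
    {w : ι → R} (hw : ∀ i, w i ∈ Set.Icc 0 1) (i : ι) : (M *ᵥ w) i ∈ Set.Icc 0 1 := by
  refine ⟨nonneg_mulVec_of_mem_rowStochastic hM (fun j => (hw j).1) i, ?_⟩
  calc (M *ᵥ w) i = ∑ j, M i j * w j := rfl
    _ ≤ ∑ j, M i j * 1 := Finset.sum_le_sum fun j _ =>
        mul_le_mul_of_nonneg_left (hw j).2 (nonneg_of_mem_rowStochastic hM)
    _ = 1 := by simpa using sum_row_of_mem_rowStochastic hM i

end Matrix

lemma exists_unitCube_sum_eq {n : ℕ} {x : ℝ} (hx : x ∈ Set.Icc (0 : ℝ) n) :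
    ∃ w : Fin n → ℝ, (∀ i, w i ∈ Set.Icc (0 : ℝ) 1) ∧ ∑ i, w i = x := by
  rcases Nat.eq_zero_or_pos n with rfl | hn
  · exact ⟨0, fun i => i.elim0, by simpa using (le_antisymm (by simpa using hx.2) hx.1).symm⟩
  · have hn : (0 : ℝ) < n := Nat.cast_pos.mpr hn
    refine ⟨fun _ => x / n, fun _ => ⟨div_nonneg hx.1 hn.le, (div_le_one hn).mpr hx.2⟩, ?_⟩
    simp [mul_div_cancel₀ x hn.ne']

lemma LScurve_le_LScurve_of_forall_exists {n : ℕ} {q p : Fin n → ℝ} {x : ℝ}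
    (hx : x ∈ Set.Icc (0 : ℝ) n)
    (h : ∀ w : Fin n → ℝ, (∀ i, w i ∈ Set.Icc (0 : ℝ) 1) → ∑ i, w i = x →
      ∃ w' : Fin n → ℝ, (∀ i, w' i ∈ Set.Icc (0 : ℝ) 1) ∧ ∑ i, w' i = x ∧
        ∑ i, q i * w i = ∑ i, p i * w' i) :
    LScurve q x ≤ LScurve p x := by
  have hbdd : BddAbove {s | ∃ w : Fin n → ℝ, (∀ i, w i ∈ Set.Icc (0 : ℝ) 1) ∧
      (∑ i, w i) = x ∧ s = ∑ i, p i * w i} := by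
    refine ⟨∑ i, |p i|, ?_⟩
    rintro s ⟨w, hw, -, rfl⟩
    exact Finset.sum_le_sum fun i _ =>
      (mul_le_mul_of_nonneg_right (le_abs_self (p i)) (hw i).1).trans
        (mul_le_of_le_one_right (abs_nonneg _) (hw i).2)
  obtain ⟨w₀, hw₀, hsum₀⟩ := exists_unitCube_sum_eq hx
  refine csSup_le_csSup hbdd ⟨_, w₀, hw₀, hsum₀, rfl⟩ ?_
  rintro s ⟨w, hw, hsum, rfl⟩
  exact h w hw hsum

theorem LScurve_mulVec_le_general {n : ℕ} (M : Matrix (Fin n) (Fin n) ℝ)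
    (hnn : ∀ u v, 0 ≤ M u v) (hrow : ∀ u, ∑ v, M u v = 1)
    (hcol : ∀ v, ∑ u, M u v = 1)
    (p : Fin n → ℝ) :
    ∀ x ∈ Set.Icc (0 : ℝ) n, LScurve (M.mulVec p) x ≤ LScurve p x := by
  have hM : Mᵀ ∈ doublyStochastic ℝ (Fin n) :=
    transpose_mem_doublyStochastic_iff.mpr (mem_doublyStochastic_iff_sum.mpr ⟨hnn, hrow, hcol⟩)
  intro x hx
  refine LScurve_le_LScurve_of_forall_exists hx fun w hw hsum => ⟨Mᵀ *ᵥ w, ?_, ?_, ?_⟩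
  · exact mulVec_mem_Icc_of_mem_rowStochastic
      (mem_doublyStochastic_iff_mem_rowStochastic_and_mem_colStochastic.mp hM).1 hw
  · rw [sum_mulVec_of_mem_doublyStochastic hM, hsum]
  · change (M *ᵥ p) ⬝ᵥ w = p ⬝ᵥ (Mᵀ *ᵥ w)
    rw [dotProduct_mulVec, vecMul_transpose]

/-- Applying a doubly stochastic matrix does not increase the LS curve:
`I(Mp, x) ≤ I(p, x)` for all `x ∈ [0, n]`. -/
theorem LScurve_mulVec_le {n : ℕ} (M : Matrix (Fin n) (Fin n) ℝ)
    (hnn : ∀ u v, 0 ≤ M u v) (hrow : ∀ u, ∑ v, M u v = 1)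
    (hcol : ∀ v, ∑ u, M u v = 1)
    (p : Fin n → ℝ) (hp : ∀ i, 0 ≤ p i) :
    ∀ x ∈ Set.Icc (0 : ℝ) n, LScurve (M.mulVec p) x ≤ LScurve p x :=
  LScurve_mulVec_le_general M hnn hrow hcol p
end

section
/- Conductance of enlarged level sets: let S ⊆ T be vertex sets in a graph of max degree d with |T| ≤ |S|(1 + ψ/2) for some ψ ∈ (0,1], and suppose the cut E(S,S̄) ≥ ψ·d|S|. Then the conductance-type ratio E(T,T̄)/(d|T|) ≥ ψ/4. -/
/-!
Passing from `S` to `T` turns at most the `d · |T \ S|` edges between `S` and `T \ S` from cut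
edges into inner edges, while it adds `|T \ S| ≤ ψ|S|/2` vertices. Hence
`E(T, T̄) ≥ ψ d |S| - ψ d |S| / 2 = ψ d |S| / 2`, whereas `d |T| ≤ 2 d |S|` since `ψ ≤ 2`.
-/

open Finset

/-- Number of edges of `G` with exactly one endpoint in `S`. -/
def cutEdges {n : ℕ} (G : SimpleGraph (Fin n)) [DecidableRel G.Adj]
    (S : Finset (Fin n)) : ℕ :=
  ((S ×ˢ Sᶜ).filter fun p => G.Adj p.1 p.2).card

namespace SimpleGraph

theorem card_interedges_le_mul_card_of_degree_le {V : Type*} [Fintype V] [DecidableEq V]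
    (G : SimpleGraph V) [DecidableRel G.Adj] {d : ℕ} (hd : ∀ v, G.degree v ≤ d) (s t : Finset V) :
    #(G.interedges s t) ≤ d * #t := by
  refine card_le_mul_card_image_of_maps_to (f := Prod.snd)
    (fun e he => ((G.mem_interedges_iff).1 he).2.1) d fun v _ => ?_
  calc #{e ∈ G.interedges s t | e.2 = v} ≤ #(G.neighborFinset v) := by
        refine card_le_card_of_injOn Prod.fst (fun e he => ?_) fun e he e' he' h => ?_
        · obtain ⟨hst, rfl⟩ := mem_filter.1 he
          exact (G.mem_neighborFinset _ _).2 ((G.mem_interedges_iff).1 hst).2.2.symm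
        · exact Prod.ext h (((mem_filter.1 he).2).trans (mem_filter.1 he').2.symm)
    _ ≤ d := (G.card_neighborFinset_eq_degree v).trans_le (hd v)

end SimpleGraph

theorem cutEdges_eq_card_interedges {n : ℕ} (G : SimpleGraph (Fin n)) [DecidableRel G.Adj]
    (S : Finset (Fin n)) : cutEdges G S = #(G.interedges S Sᶜ) :=
  rfl

theorem cutEdges_add_mul_card_le_of_subset {n d : ℕ} (G : SimpleGraph (Fin n))
    [DecidableRel G.Adj] (hd : ∀ v, G.degree v ≤ d) {S T : Finset (Fin n)} (hST : S ⊆ T) :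
    cutEdges G S + d * #S ≤ cutEdges G T + d * #T := by
  have hsplit : G.interedges S Sᶜ ⊆ G.interedges T Tᶜ ∪ G.interedges S (T \ S) := by
    rintro ⟨u, v⟩ huv
    simp only [mem_union, G.mk_mem_interedges_iff, mem_compl, mem_sdiff] at huv ⊢
    by_cases hv : v ∈ T
    · exact Or.inr ⟨huv.1, ⟨hv, huv.2.1⟩, huv.2.2⟩
    · exact Or.inl ⟨hST huv.1, hv, huv.2.2⟩
  have hcut : cutEdges G S ≤ cutEdges G T + d * #(T \ S) := by
    simp only [cutEdges_eq_card_interedges]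
    exact (card_le_card hsplit).trans <| (card_union_le _ _).trans <|
      Nat.add_le_add_left (G.card_interedges_le_mul_card_of_degree_le hd _ _) _
  rw [← card_sdiff_add_card_eq_card hST, mul_add]
  omega

/-- Conductance of enlarged level sets: if `S ⊆ T`, `|T| ≤ (1 + ψ/2)|S|`, and
`E(S,S̄) ≥ ψ·d·|S|` in a graph of max degree `d`, then
`E(T,T̄)/(d|T|) ≥ ψ/4`. -/
theorem conductance_enlarged_set {n d : ℕ} (G : SimpleGraph (Fin n))
    [DecidableRel G.Adj] (hd0 : 0 < d) (hd : ∀ v, G.degree v ≤ d)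
    (S T : Finset (Fin n)) (hS : S.Nonempty) (hST : S ⊆ T)
    (ψ : ℝ) (hψ0 : 0 < ψ) (hψ1 : ψ ≤ 1)
    (hT : (T.card : ℝ) ≤ (1 + ψ / 2) * S.card)
    (hcut : ψ * d * S.card ≤ (cutEdges G S : ℝ)) :
    ψ / 4 ≤ (cutEdges G T : ℝ) / (d * T.card) := by
  have hmono : (cutEdges G S : ℝ) + d * #S ≤ cutEdges G T + d * #T := by
    exact_mod_cast cutEdges_add_mul_card_le_of_subset G hd hST
  have hcutT : ψ * d * #S / 2 ≤ (cutEdges G T : ℝ) := by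
    linarith [mul_le_mul_of_nonneg_left hT (Nat.cast_nonneg (α := ℝ) d)]
  have hTS : (#T : ℝ) ≤ 2 * #S := hT.trans (by gcongr; linarith)
  have hdT : (0 : ℝ) < d * #T := by
    have := (hS.mono hST).card_pos
    positivity
  rw [le_div_iff₀ hdT]
  calc ψ / 4 * (d * #T) ≤ ψ / 4 * (d * (2 * #S)) := by gcongr
    _ = ψ * d * #S / 2 := by ring
    _ ≤ cutEdges G T := hcutT
end
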